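/- arXiv:1802.04483 — 5 statements merged into one kernel-verified Lean document; each statement's English description precedes it below -/
import Mathlib

section
/- Let f(x,θ) = n x^{n−1}/θⁿ on [0,θ] and g(x,θ) = n(n+1)(1 − x/θ) x^{n−1}/θⁿ on [0,θ]. Then g(·,θ) is a probability density, and for T(x) = (n+1)x/n one has λ(θ) := ∫₀^θ T(x) g(x,θ) dx = (n+1)θ/(n+2) and the generalized Fisher information N(θ) := ∫₀^θ (∂_θ g(x,θ))²/f(x,θ) dx = n(n+1)²/((n+2)θ²), so that (λ′(θ))²/N(θ) = θ²/(n(n+2)) = Var_{f_θ}(T). -/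
/-!
Every integrand is, on `(0, θ)`, the monomial `x ^ (n - 1)` times a quadratic polynomial in `x`,
so each integral reduces to `∫₀^θ x ^ (n - 1) (a + b x + c x²)`. For the generalized Fisher
information this needs `x ≠ 0`: `(∂_θ g)²` carries `x ^ (2(n - 1))`, of which the density `f`
cancels one factor `x ^ (n - 1)`; the endpoint is negligible.
-/

open Set intervalIntegral

theorem integral_pow_pred_mul_quadratic {n : ℕ} (hn : n ≠ 0) (θ a b c : ℝ) :
    ∫ x in (0:ℝ)..θ, x ^ (n - 1) * (a + b * x + c * x ^ 2) =
      a * θ ^ n / n + b * θ ^ (n + 1) / (n + 1) + c * θ ^ (n + 2) / (n + 2) := by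
  obtain ⟨m, rfl⟩ := Nat.exists_eq_add_one_of_ne_zero hn
  have expand : ∀ x : ℝ, x ^ m * (a + b * x + c * x ^ 2) =
      a * x ^ m + b * x ^ (m + 1) + c * x ^ (m + 2) := fun x => by ring
  simp only [Nat.add_sub_cancel, expand]
  rw [integral_add, integral_add] <;> try exact Continuous.intervalIntegrable (by fun_prop) _ _
  simp only [integral_const_mul, integral_pow]
  push_cast
  ring

theorem hasDerivAt_one_sub_div_div_pow (n : ℕ) (x : ℝ) {t : ℝ} (ht : t ≠ 0) :
    HasDerivAt (fun s => (1 - x / s) / s ^ n) (((n + 1) * x - n * t) / t ^ (n + 2)) t := by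
  have hnum : HasDerivAt (fun s => 1 - x / s) (x / t ^ 2) t := by
    simpa [div_eq_mul_inv] using ((hasDerivAt_inv ht).const_mul x).const_sub 1
  refine (hnum.div (hasDerivAt_pow n t) (pow_ne_zero n ht)).congr_deriv ?_
  rcases n with _ | m
  · field_simp; ring
  · field_simp; push_cast; ring

/-- The density on `[0, θ]` of the maximum of `n` independent uniform samples on `[0, θ]`. -/
noncomputable def uniformMaxDensity (n : ℕ) (x θ : ℝ) : ℝ :=
  n * x ^ (n - 1) / θ ^ n

/-- Naudts's escort density of `uniformMaxDensity`. -/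
noncomputable def uniformMaxEscort (n : ℕ) (x θ : ℝ) : ℝ :=
  n * (n + 1) * (1 - x / θ) * x ^ (n - 1) / θ ^ n

theorem hasDerivAt_uniformMaxEscort (n : ℕ) (x : ℝ) {θ : ℝ} (hθ : θ ≠ 0) :
    HasDerivAt (uniformMaxEscort n x)
      (n * (n + 1) * x ^ (n - 1) * ((n + 1) * x - n * θ) / θ ^ (n + 2)) θ := by
  have h := (hasDerivAt_one_sub_div_div_pow n x hθ).const_mul (n * (n + 1) * x ^ (n - 1))
  have hfun : uniformMaxEscort n x =
      fun t => n * (n + 1) * x ^ (n - 1) * ((1 - x / t) / t ^ n) := by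
    funext t; simp only [uniformMaxEscort]; ring
  exact hfun ▸ h.congr_deriv (by ring)

section

variable {n : ℕ} {θ : ℝ}

theorem integral_uniformMaxEscort (hn : n ≠ 0) (hθ : θ ≠ 0) :
    ∫ x in (0:ℝ)..θ, uniformMaxEscort n x θ = 1 := by
  have hn' : (n : ℝ) ≠ 0 := Nat.cast_ne_zero.mpr hn
  have h : ∀ x, uniformMaxEscort n x θ =
      x ^ (n - 1) * (n * (n + 1) / θ ^ n + -(n * (n + 1) / θ ^ (n + 1)) * x + 0 * x ^ 2) := by
    intro x; simp only [uniformMaxEscort]; field_simp; ring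
  simp only [h, integral_pow_pred_mul_quadratic hn]
  field_simp
  ring

theorem integral_mul_uniformMaxEscort (hn : n ≠ 0) (hθ : θ ≠ 0) :
    ∫ x in (0:ℝ)..θ, (n + 1) * x / n * uniformMaxEscort n x θ = (n + 1) * θ / (n + 2) := by
  have hn' : (n : ℝ) ≠ 0 := Nat.cast_ne_zero.mpr hn
  have h : ∀ x, (n + 1) * x / n * uniformMaxEscort n x θ =
      x ^ (n - 1) * (0 + (n + 1) ^ 2 / θ ^ n * x + -((n + 1) ^ 2 / θ ^ (n + 1)) * x ^ 2) := by
    intro x; simp only [uniformMaxEscort]; field_simp; ring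
  simp only [h, integral_pow_pred_mul_quadratic hn]
  field_simp
  ring

theorem integral_deriv_uniformMaxEscort_sq_div_uniformMaxDensity (hn : n ≠ 0) (hθ : θ ≠ 0) :
    ∫ x in (0:ℝ)..θ, deriv (uniformMaxEscort n x) θ ^ 2 / uniformMaxDensity n x θ =
      n * (n + 1) ^ 2 / ((n + 2) * θ ^ 2) := by
  have hn' : (n : ℝ) ≠ 0 := Nat.cast_ne_zero.mpr hn
  have h : EqOn (fun x => deriv (uniformMaxEscort n x) θ ^ 2 / uniformMaxDensity n x θ)
      (fun x => x ^ (n - 1) * (n ^ 3 * (n + 1) ^ 2 / θ ^ (n + 2)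
        + -(2 * n ^ 2 * (n + 1) ^ 3 / θ ^ (n + 3)) * x + n * (n + 1) ^ 4 / θ ^ (n + 4) * x ^ 2))
      (uIoo 0 θ) := by
    intro x hx
    have hx0 : x ≠ 0 := ne_of_mem_of_not_mem hx left_notMem_uIoo
    simp only [(hasDerivAt_uniformMaxEscort n x hθ).deriv, uniformMaxDensity]
    field_simp
    ring
  rw [integral_congr_uIoo h, integral_pow_pred_mul_quadratic hn]
  field_simp
  ring

theorem integral_sq_sub_mul_uniformMaxDensity (hn : n ≠ 0) (hθ : θ ≠ 0) :
    ∫ x in (0:ℝ)..θ, ((n + 1) * x / n - θ) ^ 2 * uniformMaxDensity n x θ =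
      θ ^ 2 / (n * (n + 2)) := by
  have hn' : (n : ℝ) ≠ 0 := Nat.cast_ne_zero.mpr hn
  have h : ∀ x, ((n + 1) * x / n - θ) ^ 2 * uniformMaxDensity n x θ =
      x ^ (n - 1) * (n * θ ^ 2 / θ ^ n + -(2 * (n + 1) * θ / θ ^ n) * x
        + (n + 1) ^ 2 / (n * θ ^ n) * x ^ 2) := by
    intro x; simp only [uniformMaxDensity]; field_simp; ring
  simp only [h, integral_pow_pred_mul_quadratic hn]
  field_simp
  ring

end

/-- Naudts's generalized Cramér–Rao bound is attained for the uniform-maximum model: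
with `f(x,θ) = n x^(n-1)/θⁿ` and escort `g(x,θ) = n(n+1)(1 − x/θ)x^(n-1)/θⁿ` on `[0,θ]`,
`g` is a density, `λ(θ) = (n+1)θ/(n+2)`, `N(θ) = n(n+1)²/((n+2)θ²)`, and
`(λ′(θ))²/N(θ) = θ²/(n(n+2)) = Var_{f_θ}((n+1)X/n)`. -/
theorem uniform_max_naudts_bound_attained
    (n : ℕ) (hn : 1 ≤ n) (θ : ℝ) (hθ : 0 < θ)
    (f g : ℝ → ℝ → ℝ)
    (hf : ∀ x t, f x t = n * x ^ (n - 1) / t ^ n)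
    (hg : ∀ x t, g x t = n * (n + 1) * (1 - x / t) * x ^ (n - 1) / t ^ n) :
    (∫ x in (0:ℝ)..θ, g x θ) = 1 ∧
    (∫ x in (0:ℝ)..θ, ((n + 1) * x / n) * g x θ) = (n + 1) * θ / (n + 2) ∧
    (∫ x in (0:ℝ)..θ, (deriv (fun t => g x t) θ) ^ 2 / f x θ) =
      n * (n + 1) ^ 2 / ((n + 2) * θ ^ 2) ∧
    (deriv (fun t => (n + 1) * t / (n + 2) : ℝ → ℝ) θ) ^ 2 /
        (n * (n + 1) ^ 2 / ((n + 2) * θ ^ 2)) = θ ^ 2 / (n * (n + 2)) ∧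
    θ ^ 2 / (n * (n + 2)) =
      ∫ x in (0:ℝ)..θ, ((n + 1) * x / n - θ) ^ 2 * f x θ := by
  obtain rfl : f = uniformMaxDensity n := funext₂ hf
  obtain rfl : g = uniformMaxEscort n := funext₂ hg
  have hn0 : n ≠ 0 := Nat.one_le_iff_ne_zero.mp hn
  have hn' : (n : ℝ) ≠ 0 := Nat.cast_ne_zero.mpr hn0
  have hmean : deriv (fun t : ℝ => (n + 1) * t / (n + 2)) θ = (n + 1) / (n + 2) :=
    (((hasDerivAt_id θ).const_mul _).div_const _).deriv.trans (by simp)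
  refine ⟨integral_uniformMaxEscort hn0 hθ.ne', integral_mul_uniformMaxEscort hn0 hθ.ne',
    integral_deriv_uniformMaxEscort_sq_div_uniformMaxDensity hn0 hθ.ne', ?_,
    (integral_sq_sub_mul_uniformMaxDensity hn0 hθ.ne').symm⟩
  rw [hmean]
  field_simp
end

section
/- Let f(x,θ) = n e^{−n(x−θ)} and g(x,θ) = n²(x−θ) e^{−n(x−θ)} for x ≥ θ. Then g(·,θ) is a probability density, λ(θ) := ∫_θ^∞ (x − 1/n) g(x,θ) dx = θ + 1/n, N(θ) := ∫_θ^∞ (∂_θ g(x,θ))²/f(x,θ) dx = n², and (λ′(θ))²/N(θ) = 1/n² = Var_{f_θ}(X − 1/n). -/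
/-!
Everything reduces to the Gamma integrals `∫₀^∞ y^k e^{-n y} dy = k!/n^{k+1}` for `k ≤ 2`:
after the shift `y = x - θ`, each integrand is a quadratic polynomial in `y` times `e^{-n y}`.
In particular `∂_θ g = n²(n(x-θ) - 1)e^{-n(x-θ)}`, so `(∂_θ g)²/f = n³(n y - 1)² e^{-n y}`.
-/

open MeasureTheory Real Set

theorem setIntegral_Ioi_comp_sub (F : ℝ → ℝ) (θ : ℝ) :
    ∫ x in Ioi θ, F (x - θ) = ∫ y in Ioi 0, F y := by
  simpa using (measurePreserving_add_right (volume : Measure ℝ) θ).setIntegral_image_emb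
    (measurableEmbedding_addRight θ) (fun x => F (x - θ)) (Ioi 0)

section GammaMoments

variable {r : ℝ}

theorem integrableOn_pow_mul_exp_neg_mul_Ioi (hr : 0 < r) (k : ℕ) :
    IntegrableOn (fun x => x ^ k * exp (-(r * x))) (Ioi 0) := by
  refine (integrableOn_rpow_mul_exp_neg_mul_rpow (p := 1) (s := k)
    (by linarith [k.cast_nonneg (α := ℝ)]) zero_lt_one hr).congr_fun
    (fun x _ => ?_) measurableSet_Ioi
  simp only [rpow_one, rpow_natCast, neg_mul]

theorem integral_pow_mul_exp_neg_mul_Ioi (hr : 0 < r) (k : ℕ) :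
    ∫ x in Ioi 0, x ^ k * exp (-(r * x)) = k.factorial / r ^ (k + 1) := by
  have h := integral_rpow_mul_exp_neg_mul_Ioi (a := k + 1) (by positivity) hr
  simp only [add_sub_cancel_right, rpow_natCast] at h
  rw [h, Gamma_nat_eq_factorial, ← Nat.cast_add_one, rpow_natCast, div_pow, one_pow]
  ring

theorem integral_quadratic_mul_exp_neg_mul_Ioi (hr : 0 < r) (a b c : ℝ) :
    ∫ x in Ioi 0, (a * x ^ 2 + b * x + c) * exp (-(r * x)) = 2 * a / r ^ 3 + b / r ^ 2 + c / r := by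
  have hint := integrableOn_pow_mul_exp_neg_mul_Ioi hr
  have hsplit : (fun x => (a * x ^ 2 + b * x + c) * exp (-(r * x))) = fun x =>
      a * (x ^ 2 * exp (-(r * x))) + b * (x ^ 1 * exp (-(r * x))) + c * (x ^ 0 * exp (-(r * x))) := by
    funext x; ring
  rw [hsplit, integral_add, integral_add, integral_const_mul, integral_const_mul,
    integral_const_mul, integral_pow_mul_exp_neg_mul_Ioi hr, integral_pow_mul_exp_neg_mul_Ioi hr,
    integral_pow_mul_exp_neg_mul_Ioi hr]
  · norm_num [Nat.factorial]
    ring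
  · exact (hint 2).const_mul a
  · exact (hint 1).const_mul b
  · exact ((hint 2).const_mul a).add ((hint 1).const_mul b)
  · exact (hint 0).const_mul c

theorem integral_quadratic_mul_exp_neg_mul_sub_Ioi (hr : 0 < r) (θ a b c : ℝ) :
    ∫ x in Ioi θ, (a * (x - θ) ^ 2 + b * (x - θ) + c) * exp (-(r * (x - θ)))
      = 2 * a / r ^ 3 + b / r ^ 2 + c / r :=
  (setIntegral_Ioi_comp_sub (fun y => (a * y ^ 2 + b * y + c) * exp (-(r * y))) θ).trans
    (integral_quadratic_mul_exp_neg_mul_Ioi hr a b c)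

end GammaMoments

theorem hasDerivAt_sq_mul_sub_mul_exp_neg_mul_sub (r x θ : ℝ) :
    HasDerivAt (fun t => r ^ 2 * (x - t) * exp (-(r * (x - t))))
      (r ^ 2 * (r * (x - θ) - 1) * exp (-(r * (x - θ)))) θ := by
  have hsub : HasDerivAt (fun t => x - t) (-1) θ := by
    simpa using (hasDerivAt_id θ).const_sub x
  exact ((hsub.const_mul (r ^ 2)).mul (hsub.const_mul r).neg.exp).congr_deriv
    (by simp only [Pi.neg_apply]; ring)

theorem shifted_exponential_naudts_bound_attained_general
    (n : ℕ) (hn : 1 ≤ n) (θ : ℝ)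
    (f g : ℝ → ℝ → ℝ)
    (hf : ∀ x t, f x t = (n : ℝ) * Real.exp (-((n : ℝ) * (x - t))))
    (hg : ∀ x t, g x t = (n : ℝ) ^ 2 * (x - t) * Real.exp (-((n : ℝ) * (x - t)))) :
    (∫ x in Set.Ioi θ, g x θ) = 1 ∧
    (∫ x in Set.Ioi θ, (x - 1 / (n : ℝ)) * g x θ) = θ + 1 / (n : ℝ) ∧
    (∫ x in Set.Ioi θ, (deriv (fun t => g x t) θ) ^ 2 / f x θ) = (n : ℝ) ^ 2 ∧
    (deriv (fun t => t + 1 / (n : ℝ)) θ) ^ 2 / (n : ℝ) ^ 2 = 1 / (n : ℝ) ^ 2 ∧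
    (1 : ℝ) / (n : ℝ) ^ 2 = ∫ x in Set.Ioi θ, (x - 1 / (n : ℝ) - θ) ^ 2 * f x θ := by
  have hn_pos : (0 : ℝ) < n := by exact_mod_cast hn
  have moment : ∀ (a b c : ℝ) (G : ℝ → ℝ),
      (∀ x, G x = (a * (x - θ) ^ 2 + b * (x - θ) + c) * exp (-(n * (x - θ)))) →
      ∫ x in Ioi θ, G x = 2 * a / (n : ℝ) ^ 3 + b / (n : ℝ) ^ 2 + c / n := fun a b c G hG => by
    simp_rw [hG]
    exact integral_quadratic_mul_exp_neg_mul_sub_Ioi hn_pos θ a b c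
  have hderiv : ∀ x, deriv (fun t => g x t) θ
      = (n : ℝ) ^ 2 * (n * (x - θ) - 1) * exp (-(n * (x - θ))) := fun x => by
    rw [show (fun t => g x t) = _ from funext (hg x)]
    exact (hasDerivAt_sq_mul_sub_mul_exp_neg_mul_sub _ x θ).deriv
  refine ⟨?_, ?_, ?_, ?_, ?_⟩
  · rw [moment 0 ((n : ℝ) ^ 2) 0 _ fun x => by rw [hg]; ring]
    field_simp
    ring
  · rw [moment ((n : ℝ) ^ 2) ((θ - 1 / n) * (n : ℝ) ^ 2) 0 _ fun x => by rw [hg]; ring]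
    field_simp
    ring
  · rw [moment ((n : ℝ) ^ 5) (-2 * (n : ℝ) ^ 4) ((n : ℝ) ^ 3) _ fun x => by
      rw [hderiv, hf]
      field_simp [(exp_pos (-(n * (x - θ)))).ne']
      ring]
    field_simp
    ring
  · rw [deriv_add_const, deriv_id'', one_pow]
  · rw [moment n (-2) (1 / n) _ fun x => by rw [hf]; field_simp; ring]
    field_simp
    ring

/-- Naudts's generalized Cramér–Rao bound is attained for the shifted-exponential-minimum
model: with `f(x,θ) = n e^{−n(x−θ)}` and escort `g(x,θ) = n²(x−θ)e^{−n(x−θ)}` on `[θ,∞)`,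
`g` is a density, `λ(θ) = θ + 1/n`, `N(θ) = n²`, and
`(λ′(θ))²/N(θ) = 1/n² = Var_{f_θ}(X − 1/n)`. -/
theorem shifted_exponential_naudts_bound_attained
    (n : ℕ) (hn : 1 ≤ n) (θ : ℝ) (hθ : 0 < θ)
    (f g : ℝ → ℝ → ℝ)
    (hf : ∀ x t, f x t = (n : ℝ) * Real.exp (-((n : ℝ) * (x - t))))
    (hg : ∀ x t, g x t = (n : ℝ) ^ 2 * (x - t) * Real.exp (-((n : ℝ) * (x - t)))) :
    (∫ x in Set.Ioi θ, g x θ) = 1 ∧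
    (∫ x in Set.Ioi θ, (x - 1 / (n : ℝ)) * g x θ) = θ + 1 / (n : ℝ) ∧
    (∫ x in Set.Ioi θ, (deriv (fun t => g x t) θ) ^ 2 / f x θ) = (n : ℝ) ^ 2 ∧
    (deriv (fun t => t + 1 / (n : ℝ)) θ) ^ 2 / (n : ℝ) ^ 2 = 1 / (n : ℝ) ^ 2 ∧
    (1 : ℝ) / (n : ℝ) ^ 2 = ∫ x in Set.Ioi θ, (x - 1 / (n : ℝ) - θ) ^ 2 * f x θ :=
  shifted_exponential_naudts_bound_attained_general n hn θ f g hf hg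
end

section
/- Let f(x,θ) = n x^{n−1}/θⁿ on [0,θ], k ≥ 1, and g(x,θ) = n(n+k)(1 − x^k/θ^k) x^{n−1}/(k θⁿ) on [0,θ]. Then g(·,θ) is a probability density and with T(x) = (n+k)x^k/n, λ(θ) := ∫₀^θ T g dx satisfies (λ′(θ))²/N(θ) = k²θ^{2k}/(n(n+2k)) = Var_{f_θ}(T), where N(θ) = ∫₀^θ (∂_θ g(x,θ))²/f(x,θ) dx. -/
/-!
Every integrand in the statement is `x ^ (n - 1)` times a quadratic polynomial in `(x / θ) ^ k`,
and `∫₀^θ x ^ (n - 1) (x / θ) ^ (j * k) dx = θ ^ n / (n + j * k)`. This gives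
`λ(θ) = (n + k) θ ^ k / (n + 2k)`, `N(θ) = n (n + k)² / ((n + 2k) θ²)` and
`Var(T) = k² θ ^ (2k) / (n (n + 2k))`, and the claimed identities are then rational-function
identities in `n`, `k`, `θ`.
-/

open intervalIntegral

noncomputable section

def maxUniformDensity (n : ℕ) (x t : ℝ) : ℝ := n * x ^ (n - 1) / t ^ n

def escortDensity (n k : ℕ) (x t : ℝ) : ℝ :=
  n * (n + k) * (1 - x ^ k / t ^ k) * x ^ (n - 1) / (k * t ^ n)

end

theorem integral_pow_sub_one_mul_quadratic {n : ℕ} (hn : n ≠ 0) (k : ℕ) (a b c : ℝ)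
    {θ : ℝ} (hθ : θ ≠ 0) :
    ∫ x in (0:ℝ)..θ, x ^ (n - 1) * (a + b * (x / θ) ^ k + c * ((x / θ) ^ k) ^ 2) =
      θ ^ n * (a / n + b / (n + k) + c / (n + 2 * k)) := by
  obtain ⟨m, rfl⟩ := Nat.exists_eq_succ_of_ne_zero hn
  have hpow (p : ℕ) : IntervalIntegrable (fun x : ℝ => x ^ p) MeasureTheory.volume 0 θ :=
    (continuous_pow p).intervalIntegrable 0 θ
  calc ∫ x in (0:ℝ)..θ, x ^ (m + 1 - 1) * (a + b * (x / θ) ^ k + c * ((x / θ) ^ k) ^ 2)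
      = ∫ x in (0:ℝ)..θ,
          (a * x ^ m + b / θ ^ k * x ^ (m + k) + c / θ ^ (2 * k) * x ^ (m + 2 * k)) :=
        integral_congr fun x _ => by simp only [Nat.add_sub_cancel, div_pow]; field_simp; ring
    _ = θ ^ (m + 1) * (a / ↑(m + 1) + b / (↑(m + 1) + k) + c / (↑(m + 1) + 2 * k)) := by
      rw [integral_add ((hpow _).const_mul _ |>.add ((hpow _).const_mul _)) ((hpow _).const_mul _),
        integral_add ((hpow _).const_mul _) ((hpow _).const_mul _), integral_const_mul,
        integral_const_mul, integral_const_mul, integral_pow, integral_pow, integral_pow]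
      push_cast
      field_simp
      ring

theorem hasDerivAt_inv_pow (p : ℕ) {θ : ℝ} (hθ : θ ≠ 0) :
    HasDerivAt (fun t : ℝ => (t ^ p)⁻¹) (-p / θ ^ (p + 1)) θ := by
  refine ((hasDerivAt_pow p θ).inv (pow_ne_zero p hθ)).congr_deriv ?_
  rcases p with _ | p
  · simp
  · simp only [Nat.add_sub_cancel]
    field_simp
    ring

theorem hasDerivAt_escortDensity {k : ℕ} (hk : k ≠ 0) (n : ℕ) (x : ℝ) {θ : ℝ}
    (hθ : θ ≠ 0) :
    HasDerivAt (fun t => escortDensity n k x t)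
      (n * (n + k) / (k * θ ^ (n + 1)) * x ^ (n - 1) * ((n + k) * (x / θ) ^ k - n)) θ := by
  have h := ((hasDerivAt_inv_pow n hθ).sub ((hasDerivAt_inv_pow (n + k) hθ).const_mul (x ^ k))
    ).const_mul (n * (n + k) * x ^ (n - 1) / k)
  refine (h.congr_of_eventuallyEq ?_).congr_deriv ?_
  · filter_upwards [eventually_ne_nhds hθ] with t ht
    simp only [escortDensity, Pi.sub_apply]
    field_simp
    ring
  · rw [div_pow]
    push_cast
    field_simp
    ring

section

variable {n k : ℕ}

theorem integral_escortDensity (hn : n ≠ 0) (hk : k ≠ 0) {θ : ℝ} (hθ : θ ≠ 0) :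
    ∫ x in (0:ℝ)..θ, escortDensity n k x θ = 1 := by
  set C : ℝ := n * (n + k) / (k * θ ^ n)
  calc ∫ x in (0:ℝ)..θ, escortDensity n k x θ
      = ∫ x in (0:ℝ)..θ, x ^ (n - 1) * (C + -C * (x / θ) ^ k + 0 * ((x / θ) ^ k) ^ 2) :=
        integral_congr fun x _ => by simp only [escortDensity, C, div_pow]; ring
    _ = 1 := by
      rw [integral_pow_sub_one_mul_quadratic hn k _ _ _ hθ]
      simp only [C]
      field_simp
      ring

theorem integral_mul_escortDensity (hn : n ≠ 0) (hk : k ≠ 0) (t : ℝ) :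
    ∫ x in (0:ℝ)..t, ((n + k) * x ^ k / n) * escortDensity n k x t =
      (n + k) / (n + 2 * k) * t ^ k := by
  rcases eq_or_ne t 0 with rfl | ht
  · simp [hk]
  set D : ℝ := (n + k) ^ 2 * t ^ k / (k * t ^ n)
  calc ∫ x in (0:ℝ)..t, ((n + k) * x ^ k / n) * escortDensity n k x t
      = ∫ x in (0:ℝ)..t, x ^ (n - 1) * (0 + D * (x / t) ^ k + -D * ((x / t) ^ k) ^ 2) :=
        integral_congr fun x _ => by simp only [escortDensity, D, div_pow]; field_simp; ring
    _ = (n + k) / (n + 2 * k) * t ^ k := by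
      rw [integral_pow_sub_one_mul_quadratic hn k _ _ _ ht]
      simp only [D]
      field_simp
      ring

theorem integral_sq_deriv_escortDensity_div_maxUniformDensity (hn : n ≠ 0) (hk : k ≠ 0)
    {θ : ℝ} (hθ : θ ≠ 0) :
    ∫ x in (0:ℝ)..θ,
        (deriv (fun t => escortDensity n k x t) θ) ^ 2 / maxUniformDensity n x θ =
      n * (n + k) ^ 2 / ((n + 2 * k) * θ ^ 2) := by
  set E : ℝ := n * (n + k) ^ 2 / (k ^ 2 * θ ^ (n + 2))
  calc ∫ x in (0:ℝ)..θ,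
          (deriv (fun t => escortDensity n k x t) θ) ^ 2 / maxUniformDensity n x θ
      = ∫ x in (0:ℝ)..θ, x ^ (n - 1) * (E * n ^ 2 + E * (-2 * n * (n + k)) * (x / θ) ^ k
          + E * (n + k) ^ 2 * ((x / θ) ^ k) ^ 2) :=
        integral_congr fun x _ => by
          rw [(hasDerivAt_escortDensity hk n x hθ).deriv, maxUniformDensity, div_pow]
          -- `x ^ (n - 1)` cancels, and both sides vanish where it is zero
          rcases eq_or_ne (x ^ (n - 1)) 0 with hx | hx
          · simp [hx]
          · simp only [E]
            field_simp
            ring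
    _ = n * (n + k) ^ 2 / ((n + 2 * k) * θ ^ 2) := by
      rw [integral_pow_sub_one_mul_quadratic hn k _ _ _ hθ]
      simp only [E]
      field_simp
      ring

theorem integral_sq_sub_mul_maxUniformDensity (hn : n ≠ 0) {θ : ℝ} (hθ : θ ≠ 0) :
    ∫ x in (0:ℝ)..θ, ((n + k) * x ^ k / n - θ ^ k) ^ 2 * maxUniformDensity n x θ =
      k ^ 2 * θ ^ (2 * k) / (n * (n + 2 * k)) := by
  set F : ℝ := n * θ ^ (2 * k) / θ ^ n
  calc ∫ x in (0:ℝ)..θ, ((n + k) * x ^ k / n - θ ^ k) ^ 2 * maxUniformDensity n x θ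
      = ∫ x in (0:ℝ)..θ, x ^ (n - 1) * (F + F * (-2 * (n + k) / n) * (x / θ) ^ k
          + F * ((n + k) / n) ^ 2 * ((x / θ) ^ k) ^ 2) :=
        integral_congr fun x _ => by simp only [maxUniformDensity, F, div_pow]; field_simp; ring
    _ = k ^ 2 * θ ^ (2 * k) / (n * (n + 2 * k)) := by
      rw [integral_pow_sub_one_mul_quadratic hn k _ _ _ hθ]
      simp only [F]
      field_simp
      ring

end

/-- Naudts's generalized Cramér–Rao bound attained for `T(X) = (n+k)X^k/n` estimating `θ^k`
in the uniform-maximum model, with escort `g(x,θ) = n(n+k)(1 − x^k/θ^k)x^(n-1)/(kθⁿ)`. -/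
theorem uniform_max_power_naudts_bound_attained
    (n k : ℕ) (hn : 1 ≤ n) (hk : 1 ≤ k) (θ : ℝ) (hθ : 0 < θ)
    (f g : ℝ → ℝ → ℝ)
    (hf : ∀ x t, f x t = (n : ℝ) * x ^ (n - 1) / t ^ n)
    (hg : ∀ x t, g x t =
      (n : ℝ) * ((n : ℝ) + k) * (1 - x ^ k / t ^ k) * x ^ (n - 1) / ((k : ℝ) * t ^ n)) :
    (∫ x in (0:ℝ)..θ, g x θ) = 1 ∧
    (deriv (fun t => ∫ x in (0:ℝ)..t, (((n : ℝ) + k) * x ^ k / n) * g x t) θ) ^ 2 /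
        (∫ x in (0:ℝ)..θ, (deriv (fun t => g x t) θ) ^ 2 / f x θ) =
      (k : ℝ) ^ 2 * θ ^ (2 * k) / ((n : ℝ) * ((n : ℝ) + 2 * k)) ∧
    (k : ℝ) ^ 2 * θ ^ (2 * k) / ((n : ℝ) * ((n : ℝ) + 2 * k)) =
      ∫ x in (0:ℝ)..θ, (((n : ℝ) + k) * x ^ k / n - θ ^ k) ^ 2 * f x θ := by
  obtain rfl : f = maxUniformDensity n := funext₂ hf
  obtain rfl : g = escortDensity n k := funext₂ hg
  replace hn : n ≠ 0 := by omega
  replace hk : k ≠ 0 := by omega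
  have hderiv :
      deriv (fun t => ∫ x in (0:ℝ)..t, ((n + k) * x ^ k / n) * escortDensity n k x t) θ =
        (n + k) / (n + 2 * k) * (k * θ ^ (k - 1)) := by
    simp only [integral_mul_escortDensity hn hk, deriv_const_mul_field', deriv_pow_field]
  refine ⟨integral_escortDensity hn hk hθ.ne', ?_,
    (integral_sq_sub_mul_maxUniformDensity hn hθ.ne').symm⟩
  rw [hderiv, integral_sq_deriv_escortDensity_div_maxUniformDensity hn hk hθ.ne']
  have hpow : θ ^ (2 * k) = (θ ^ (k - 1)) ^ 2 * θ ^ 2 := by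
    rw [← mul_pow, pow_sub_one_mul hk, ← pow_mul, mul_comm]
  rw [hpow]
  field_simp
end

section
/- Let f(x,θ) be the Gamma(α,θ) density with α > 2 and let g(x,θ) = x^{α−2} e^{−x/θ}/(Γ(α−1) θ^{α−1}) on (0,∞). Then g(·,θ) is a probability density, and with T(x) = (Γ(α)/Γ(α−1)) x^{−1}, one has λ(θ) := ∫₀^∞ T(x) g(x,θ) dx = (α−1)/((α−2)θ), N(θ) := ∫₀^∞ (∂_θ g(x,θ))²/f(x,θ) dx = (α−1)²/((α−2)θ²), and (λ′(θ))²/N(θ) = Var_{f_θ}(T) = [Γ(α)Γ(α−2)/Γ(α−1)² − 1] θ^{−2}. -/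
open MeasureTheory Real

lemma gaux_int {s θ : ℝ} (hs : -1 < s) (hθ : 0 < θ) :
    IntegrableOn (fun x : ℝ => x ^ s * Real.exp (-x / θ)) (Set.Ioi 0) := by
  have h := integrableOn_rpow_mul_exp_neg_mul_rpow (s := s) (p := 1) (b := θ⁻¹)
    hs zero_lt_one (inv_pos.mpr hθ)
  refine h.congr_fun (fun x _ => ?_) measurableSet_Ioi
  simp only [Real.rpow_one]
  ring_nf

lemma gaux {a θ : ℝ} (ha : 0 < a) (hθ : 0 < θ) :
    ∫ x in Set.Ioi (0:ℝ), x ^ (a - 1) * Real.exp (-x / θ) = Real.Gamma a * θ ^ a := by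
  have h := Real.integral_rpow_mul_exp_neg_mul_Ioi ha (inv_pos.mpr hθ)
  rw [one_div, inv_inv, mul_comm] at h
  rw [← h]
  refine setIntegral_congr_fun measurableSet_Ioi (fun x _ => ?_)
  ring_nf

lemma gsum {α θ : ℝ} (hα : 2 < α) (hθ : 0 < θ) (A B C : ℝ) :
    (∫ x in Set.Ioi (0:ℝ),
      (A * (x ^ (α-1) * Real.exp (-x/θ)) + (B * (x ^ (α-2) * Real.exp (-x/θ))
        + C * (x ^ (α-3) * Real.exp (-x/θ))))) =
      A * (Real.Gamma α * θ ^ α) + (B * (Real.Gamma (α-1) * θ ^ (α-1))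
        + C * (Real.Gamma (α-2) * θ ^ (α-2))) := by
  have h1 : IntegrableOn (fun x : ℝ => x ^ (α-1) * Real.exp (-x/θ)) (Set.Ioi 0) :=
    gaux_int (by linarith) hθ
  have h2 : IntegrableOn (fun x : ℝ => x ^ (α-2) * Real.exp (-x/θ)) (Set.Ioi 0) :=
    gaux_int (by linarith) hθ
  have h3 : IntegrableOn (fun x : ℝ => x ^ (α-3) * Real.exp (-x/θ)) (Set.Ioi 0) :=
    gaux_int (by linarith) hθ
  have g1 : (∫ x in Set.Ioi (0:ℝ), x ^ (α-1) * Real.exp (-x/θ)) = Real.Gamma α * θ ^ α :=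
    gaux (by linarith) hθ
  have g2 : (∫ x in Set.Ioi (0:ℝ), x ^ (α-2) * Real.exp (-x/θ))
      = Real.Gamma (α-1) * θ ^ (α-1) := by
    have := gaux (a := α-1) (by linarith) hθ
    rwa [show α - 1 - 1 = α - 2 by ring] at this
  have g3 : (∫ x in Set.Ioi (0:ℝ), x ^ (α-3) * Real.exp (-x/θ))
      = Real.Gamma (α-2) * θ ^ (α-2) := by
    have := gaux (a := α-2) (by linarith) hθ
    rwa [show α - 2 - 1 = α - 3 by ring] at this
  have h23 : IntegrableOn (fun x : ℝ => B * (x ^ (α-2) * Real.exp (-x/θ))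
      + C * (x ^ (α-3) * Real.exp (-x/θ))) (Set.Ioi 0) :=
    (h2.const_mul B).add (h3.const_mul C)
  rw [integral_add (h1.const_mul A) h23,
    integral_add (h2.const_mul B) (h3.const_mul C),
    integral_const_mul, integral_const_mul, integral_const_mul, g1, g2, g3]

lemma gderiv {α θ : ℝ} (x : ℝ) (hα : 2 < α) (hθ : 0 < θ) :
    HasDerivAt (fun t => x ^ (α-2) * Real.exp (-x/t) / (Real.Gamma (α-1) * t ^ (α-1)))
      ((x ^ (α-2) * (Real.exp (-x/θ) * (x / θ^2)) * (Real.Gamma (α-1) * θ ^ (α-1))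
          - x ^ (α-2) * Real.exp (-x/θ) * (Real.Gamma (α-1) * ((α-1) * θ ^ (α-2))))
        / (Real.Gamma (α-1) * θ ^ (α-1))^2) θ := by
  have h1 : HasDerivAt (fun t : ℝ => -x / t) (x / θ^2) θ := by
    have h := (hasDerivAt_inv hθ.ne').const_mul (-x)
    have e : -x * -(θ^2)⁻¹ = x / θ^2 := by field_simp
    rw [e] at h
    exact h
  have h3 := (h1.exp.const_mul (x ^ (α-2)))
  have h4 : HasDerivAt (fun t : ℝ => Real.Gamma (α-1) * t ^ (α-1))
      (Real.Gamma (α-1) * ((α-1) * θ ^ (α-2))) θ := by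
    have := (Real.hasDerivAt_rpow_const (x := θ) (p := α-1)
      (Or.inl hθ.ne')).const_mul (Real.Gamma (α-1))
    rwa [show α - 1 - 1 = α - 2 by ring] at this
  have hGpos : 0 < Real.Gamma (α-1) := Real.Gamma_pos_of_pos (by linarith)
  have hne : Real.Gamma (α-1) * θ ^ (α-1) ≠ 0 := by positivity
  exact h3.div h4 hne

/-- For the Gamma(α,θ) model `f` with `α > 2`, the escort `g(x,θ)` is the Gamma(α−1,θ)
density, `T(x) = (Γ(α)/Γ(α−1))x⁻¹` has escort mean `λ(θ) = (α−1)/((α−2)θ)`, and the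
generalized Cramér–Rao bound `(λ′(θ))²/N(θ)` equals
`Var_{f_θ}(T) = [Γ(α)Γ(α−2)/Γ(α−1)² − 1]θ⁻²`. -/
theorem gamma_inverse_naudts_bound_attained
    (α θ : ℝ) (hα : 2 < α) (hθ : 0 < θ)
    (f g : ℝ → ℝ → ℝ)
    (hf : ∀ x t, f x t = x ^ (α - 1) * Real.exp (-x / t) / (Real.Gamma α * t ^ α))
    (hg : ∀ x t, g x t =
      x ^ (α - 2) * Real.exp (-x / t) / (Real.Gamma (α - 1) * t ^ (α - 1))) :
    (∫ x in Set.Ioi (0:ℝ), g x θ) = 1 ∧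
    (∫ x in Set.Ioi (0:ℝ), (Real.Gamma α / Real.Gamma (α - 1)) * x⁻¹ * g x θ) =
      (α - 1) / ((α - 2) * θ) ∧
    (deriv (fun t => (α - 1) / ((α - 2) * t)) θ) ^ 2 /
        (∫ x in Set.Ioi (0:ℝ), (deriv (fun t => g x t) θ) ^ 2 / f x θ) =
      (Real.Gamma α * Real.Gamma (α - 2) / (Real.Gamma (α - 1)) ^ 2 - 1) / θ ^ 2 ∧
    (Real.Gamma α * Real.Gamma (α - 2) / (Real.Gamma (α - 1)) ^ 2 - 1) / θ ^ 2 =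
      ∫ x in Set.Ioi (0:ℝ),
        ((Real.Gamma α / Real.Gamma (α - 1)) * x⁻¹ - θ⁻¹) ^ 2 * f x θ := by
  have hw : 0 < Real.Gamma (α - 2) := Real.Gamma_pos_of_pos (by linarith)
  have hG1 : Real.Gamma (α - 1) = (α - 2) * Real.Gamma (α - 2) := by
    have h := Real.Gamma_add_one (s := α - 2) (by linarith : (α - 2 : ℝ) ≠ 0)
    rwa [show α - 2 + 1 = α - 1 by ring] at h
  have hGA : Real.Gamma α = (α - 1) * ((α - 2) * Real.Gamma (α - 2)) := by
    have h := Real.Gamma_add_one (s := α - 1) (by linarith : (α - 1 : ℝ) ≠ 0)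
    rw [show α - 1 + 1 = α by ring] at h
    rw [h, hG1]
  have hG1pos : 0 < Real.Gamma (α - 1) := Real.Gamma_pos_of_pos (by linarith)
  have hGApos : 0 < Real.Gamma α := Real.Gamma_pos_of_pos (by linarith)
  have hupos : 0 < θ ^ (α - 2) := Real.rpow_pos_of_pos hθ _
  have eθ2 : θ ^ (α - 1) = θ ^ (α - 2) * θ := by
    have h := Real.rpow_add_one hθ.ne' (α - 2)
    rwa [show α - 2 + 1 = α - 1 by ring] at h
  have eθ1 : θ ^ α = θ ^ (α - 2) * θ * θ := by
    have h := Real.rpow_add_one hθ.ne' (α - 1)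
    rw [show α - 1 + 1 = α by ring] at h
    rw [h, eθ2]
  -- Part 1
  have P1 : (∫ x in Set.Ioi (0:ℝ), g x θ) = 1 := by
    have hpt : ∀ x ∈ Set.Ioi (0:ℝ), g x θ =
        (1 / (Real.Gamma (α-1) * θ ^ (α-1))) * (x ^ (α-2) * Real.exp (-x/θ)) := by
      intro x _
      rw [hg]; ring
    rw [setIntegral_congr_fun measurableSet_Ioi hpt, integral_const_mul]
    have g2 : (∫ x in Set.Ioi (0:ℝ), x ^ (α-2) * Real.exp (-x/θ))
        = Real.Gamma (α-1) * θ ^ (α-1) := by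
      have := gaux (a := α-1) (by linarith) hθ
      rwa [show α - 1 - 1 = α - 2 by ring] at this
    rw [g2]
    have : Real.Gamma (α-1) * θ ^ (α-1) ≠ 0 := by positivity
    field_simp
  -- Part 2
  have P2 : (∫ x in Set.Ioi (0:ℝ), (Real.Gamma α / Real.Gamma (α - 1)) * x⁻¹ * g x θ) =
      (α - 1) / ((α - 2) * θ) := by
    have hpt : ∀ x ∈ Set.Ioi (0:ℝ),
        (Real.Gamma α / Real.Gamma (α - 1)) * x⁻¹ * g x θ =
        (Real.Gamma α / (Real.Gamma (α-1) ^ 2 * θ ^ (α-1)))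
          * (x ^ (α-3) * Real.exp (-x/θ)) := by
      intro x hx
      have hx0 : (0:ℝ) < x := hx
      have hx1 : x ^ (α - 2) = x ^ (α - 3) * x := by
        have h := Real.rpow_add_one hx0.ne' (α - 3)
        rwa [show α - 3 + 1 = α - 2 by ring] at h
      rw [hg, hx1]
      have hp : x ^ (α - 3) ≠ 0 := (Real.rpow_pos_of_pos hx0 _).ne'
      field_simp
    rw [setIntegral_congr_fun measurableSet_Ioi hpt, integral_const_mul]
    have g3 : (∫ x in Set.Ioi (0:ℝ), x ^ (α-3) * Real.exp (-x/θ))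
        = Real.Gamma (α-2) * θ ^ (α-2) := by
      have := gaux (a := α-2) (by linarith) hθ
      rwa [show α - 2 - 1 = α - 3 by ring] at this
    rw [g3, hGA, hG1, eθ2]
    have h2 : (0:ℝ) < α - 2 := by linarith
    field_simp
  -- Part 3 : compute N(θ)
  have hlam : deriv (fun t => (α - 1) / ((α - 2) * t)) θ = -((α-1) / ((α-2) * θ^2)) := by
    have hfn : (fun t : ℝ => (α - 1) / ((α - 2) * t))
        = fun t => ((α - 1) / (α - 2)) * t⁻¹ := by
      funext t
      rw [div_mul_eq_div_div, div_eq_mul_inv]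
    rw [hfn]
    have h := ((hasDerivAt_inv hθ.ne').const_mul ((α - 1) / (α - 2))).deriv
    rw [h]
    have h2 : (α - 2 : ℝ) ≠ 0 := by linarith
    field_simp
  set A : ℝ := Real.Gamma α * θ ^ α / ((Real.Gamma (α-1) * θ ^ (α-1))^2 * θ^4) with hA
  set B : ℝ := -(2*(α-1)) * (Real.Gamma α * θ ^ α)
      / ((Real.Gamma (α-1) * θ ^ (α-1))^2 * θ^3) with hB
  set C : ℝ := (α-1)^2 * (Real.Gamma α * θ ^ α)
      / ((Real.Gamma (α-1) * θ ^ (α-1))^2 * θ^2) with hC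
  have hN : (∫ x in Set.Ioi (0:ℝ), (deriv (fun t => g x t) θ) ^ 2 / f x θ) =
      A * (Real.Gamma α * θ ^ α) + (B * (Real.Gamma (α-1) * θ ^ (α-1))
        + C * (Real.Gamma (α-2) * θ ^ (α-2))) := by
    rw [← gsum hα hθ A B C]
    refine setIntegral_congr_fun measurableSet_Ioi (fun x hx => ?_)
    have hx0 : (0:ℝ) < x := hx
    have hD : deriv (fun t => g x t) θ =
        (x ^ (α-2) * (Real.exp (-x/θ) * (x / θ^2)) * (Real.Gamma (α-1) * θ ^ (α-1))
          - x ^ (α-2) * Real.exp (-x/θ) * (Real.Gamma (α-1) * ((α-1) * θ ^ (α-2))))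
        / (Real.Gamma (α-1) * θ ^ (α-1))^2 := by
      simp only [hg]
      exact (gderiv x hα hθ).deriv
    rw [hD, hf, hA, hB, hC]
    have hx1 : x ^ (α - 2) = x ^ (α - 3) * x := by
      have h := Real.rpow_add_one hx0.ne' (α - 3)
      rwa [show α - 3 + 1 = α - 2 by ring] at h
    have hx2 : x ^ (α - 1) = x ^ (α - 3) * x * x := by
      have h := Real.rpow_add_one hx0.ne' (α - 2)
      rw [show α - 2 + 1 = α - 1 by ring] at h
      rw [h, hx1]
    have hp : x ^ (α - 3) ≠ 0 := (Real.rpow_pos_of_pos hx0 _).ne'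
    have hE : Real.exp (-x/θ) ≠ 0 := (Real.exp_pos _).ne'
    rw [hx1, hx2, eθ1, eθ2]
    have hu : θ ^ (α - 2) ≠ 0 := hupos.ne'
    field_simp
    ring
  refine ⟨P1, P2, ?_, ?_⟩
  · have h1 : (α - 1 : ℝ) ≠ 0 := by linarith
    have h2 : (α - 2 : ℝ) ≠ 0 := by linarith
    have hw' : Real.Gamma (α - 2) ≠ 0 := hw.ne'
    have hu' : θ ^ (α - 2) ≠ 0 := hupos.ne'
    have hNval : (∫ x in Set.Ioi (0:ℝ), (deriv (fun t => g x t) θ) ^ 2 / f x θ)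
        = (α - 1) ^ 2 / ((α - 2) * θ ^ 2) := by
      rw [hN, hA, hB, hC, hGA, hG1, eθ1, eθ2]
      field_simp
      ring
    rw [hlam, hNval, hGA, hG1]
    field_simp
    ring
  · -- Part 4
    have hpt : ∀ x ∈ Set.Ioi (0:ℝ),
        ((Real.Gamma α / Real.Gamma (α - 1)) * x⁻¹ - θ⁻¹) ^ 2 * f x θ =
        (1 / (Real.Gamma α * θ ^ α * θ^2)) * (x ^ (α-1) * Real.exp (-x/θ))
        + ((-(2 * (Real.Gamma α / Real.Gamma (α - 1))) / (Real.Gamma α * θ ^ α * θ))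
            * (x ^ (α-2) * Real.exp (-x/θ))
          + ((Real.Gamma α / Real.Gamma (α - 1))^2 / (Real.Gamma α * θ ^ α))
            * (x ^ (α-3) * Real.exp (-x/θ))) := by
      intro x hx
      have hx0 : (0:ℝ) < x := hx
      have hx1 : x ^ (α - 2) = x ^ (α - 3) * x := by
        have h := Real.rpow_add_one hx0.ne' (α - 3)
        rwa [show α - 3 + 1 = α - 2 by ring] at h
      have hx2 : x ^ (α - 1) = x ^ (α - 3) * x * x := by
        have h := Real.rpow_add_one hx0.ne' (α - 2)
        rw [show α - 2 + 1 = α - 1 by ring] at h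
        rw [h, hx1]
      rw [hf, hx1, hx2]
      have hp : x ^ (α - 3) ≠ 0 := (Real.rpow_pos_of_pos hx0 _).ne'
      field_simp
      ring
    rw [setIntegral_congr_fun measurableSet_Ioi hpt, gsum hα hθ, eθ1, eθ2]
    have hw' : Real.Gamma (α - 2) ≠ 0 := hw.ne'
    have hu' : θ ^ (α - 2) ≠ 0 := hupos.ne'
    have hG1' : Real.Gamma (α - 1) ≠ 0 := hG1pos.ne'
    have hGA' : Real.Gamma α ≠ 0 := hGApos.ne'
    field_simp
    ring
end

section
/- Let X₁,…,Xₙ be i.i.d. Uniform[0,θ] and T = max{X₁,…,Xₙ}. Define g(x₁,…,xₙ,θ) = (n+1)/θⁿ · (1 − t/θ) on [0,θ]ⁿ where t = max{x₁,…,xₙ}. Then g integrates to 1 over [0,θ]ⁿ, E_{g_θ}[T] = λ(θ) = nθ/(n+2), and the variance of T under the uniform model, Var_{f_θ}(T) = nθ²/((n+1)²(n+2)), equals the generalized bound (λ′(θ))²/N(θ) with N(θ) = ∫_{[0,θ]ⁿ} (∂_θ g)²/f dx. -/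
open MeasureTheory Set


theorem naudts_layer (n : ℕ) (hn : 1 ≤ n) (θ : ℝ) (k : ℕ)
    (cube : Set (Fin n → ℝ)) (hcmble : MeasurableSet cube)
    (hsupmem : ∀ x ∈ cube, (⨆ i, x i) ∈ Icc (0:ℝ) θ) :
    ∫⁻ x, ENNReal.ofReal (∫ t in (0:ℝ)..(⨆ i, x i), (k:ℝ) * t ^ (k-1))
        ∂(volume.restrict cube) =
      ∫⁻ t in Ioi (0:ℝ), (volume.restrict cube) {x : Fin n → ℝ | t ≤ ⨆ i, x i} *
        ENNReal.ofReal ((k:ℝ) * t ^ (k-1)) := by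
  haveI : Nonempty (Fin n) := Fin.pos_iff_nonempty.mp hn
  have msup : Measurable fun x : Fin n → ℝ => ⨆ i, x i :=
    Measurable.iSup fun i => measurable_pi_apply i
  have h1 : (0:(Fin n → ℝ)→ℝ) ≤ᵐ[volume.restrict cube] fun x : Fin n → ℝ => ⨆ i, x i := by
    rw [Filter.EventuallyLE, ae_restrict_iff' hcmble]
    exact ae_of_all _ fun x hx => (hsupmem x hx).1
  have h2 : ∀ t > (0:ℝ), IntervalIntegrable (fun t => (k:ℝ) * t ^ (k-1)) volume 0 t :=
    fun t _ => Continuous.intervalIntegrable (by continuity) 0 t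
  have h3 : ∀ᵐ t ∂(volume.restrict (Ioi (0:ℝ))), 0 ≤ (k:ℝ) * t ^ (k-1) := by
    rw [ae_restrict_iff' measurableSet_Ioi]
    exact ae_of_all _ fun t ht => by
      have h1 : (0:ℝ) < t := ht
      positivity
  exact lintegral_comp_eq_lintegral_meas_le_mul (volume.restrict cube) h1 msup.aemeasurable h2 h3

theorem naudts_tail_meas (n : ℕ) (hn : 1 ≤ n) (θ : ℝ) (hθ : 0 < θ) (t : ℝ) (ht : t ∈ Ioc 0 θ) :
    (volume.restrict (Set.pi Set.univ (fun _ : Fin n => Set.Icc (0:ℝ) θ)))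
      {x : Fin n → ℝ | t ≤ ⨆ i, x i} = ENNReal.ofReal (θ ^ n - t ^ n) := by
  haveI : Nonempty (Fin n) := Fin.pos_iff_nonempty.mp hn
  have msup : Measurable fun x : Fin n → ℝ => ⨆ i, x i :=
    Measurable.iSup fun i => measurable_pi_apply i
  have hmble : MeasurableSet {x : Fin n → ℝ | t ≤ ⨆ i, x i} :=
    msup measurableSet_Ici
  rw [Measure.restrict_apply hmble]
  have hset : {x : Fin n → ℝ | t ≤ ⨆ i, x i} ∩
      Set.pi Set.univ (fun _ : Fin n => Set.Icc (0:ℝ) θ) =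
      Set.pi Set.univ (fun _ : Fin n => Set.Icc (0:ℝ) θ) \
      Set.pi Set.univ (fun _ : Fin n => Set.Ico (0:ℝ) t) := by
    ext x
    simp only [mem_inter_iff, mem_setOf_eq, mem_diff, Set.mem_pi, mem_univ,
      forall_true_left, true_implies, mem_Icc, mem_Ico]
    constructor
    · rintro ⟨hts, hc⟩
      refine ⟨hc, fun hall => ?_⟩
      obtain ⟨i, hi⟩ := exists_eq_ciSup_of_finite (f := x)
      exact absurd (hi ▸ (hall i).2) (not_lt.mpr hts)
    · rintro ⟨hc, hno⟩
      refine ⟨?_, hc⟩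
      push_neg at hno
      obtain ⟨i, hi⟩ := hno
      exact (hi (hc i).1).trans (le_ciSup (Set.Finite.bddAbove (Set.finite_range x)) i)
  rw [hset]
  have hsub : Set.pi Set.univ (fun _ : Fin n => Set.Ico (0:ℝ) t) ⊆
      Set.pi Set.univ (fun _ : Fin n => Set.Icc (0:ℝ) θ) :=
    Set.pi_mono fun i _ => (Set.Ico_subset_Icc_self).trans (Set.Icc_subset_Icc le_rfl ht.2)
  rw [measure_diff hsub (MeasurableSet.univ_pi fun _ => measurableSet_Ico).nullMeasurableSet]
  · rw [volume_pi_pi, volume_pi_pi]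
    simp only [Real.volume_Icc, Real.volume_Ico, sub_zero, Finset.prod_const,
      Finset.card_univ, Fintype.card_fin]
    rw [← ENNReal.ofReal_pow hθ.le, ← ENNReal.ofReal_pow ht.1.le,
      ENNReal.ofReal_sub _ (pow_nonneg ht.1.le n)]
  · rw [volume_pi_pi]
    simp [Real.volume_Ico, ENNReal.pow_lt_top ENNReal.ofReal_lt_top]

theorem cube_sup_pow (n : ℕ) (hn : 1 ≤ n) (θ : ℝ) (hθ : 0 < θ) (k : ℕ) (hk : 1 ≤ k) :
    (∫ x in Set.pi Set.univ (fun _ : Fin n => Set.Icc (0:ℝ) θ), (⨆ i, x i) ^ k) =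
      (n : ℝ) / ((n : ℝ) + k) * θ ^ (n + k) := by
  haveI : Nonempty (Fin n) := Fin.pos_iff_nonempty.mp hn
  have hkR : ((k:ℝ)) ≠ 0 := Nat.cast_ne_zero.mpr (by omega)
  have hnkR : ((n:ℝ) + (k:ℝ)) ≠ 0 := by positivity
  have hcmble : MeasurableSet (Set.pi Set.univ (fun _ : Fin n => Set.Icc (0:ℝ) θ)) :=
    MeasurableSet.univ_pi fun _ => measurableSet_Icc
  have msup : Measurable fun x : Fin n → ℝ => ⨆ i, x i :=
    Measurable.iSup fun i => measurable_pi_apply i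
  have hsupmem : ∀ x ∈ Set.pi Set.univ (fun _ : Fin n => Set.Icc (0:ℝ) θ),
      (⨆ i, x i) ∈ Icc (0:ℝ) θ := by
    intro x hx
    constructor
    · exact le_trans (hx ⟨0, hn⟩ (mem_univ _)).1
        (le_ciSup (Set.Finite.bddAbove (Set.finite_range x)) _)
    · exact ciSup_le fun i => (hx i (mem_univ _)).2
  have hvolcube : volume (Set.pi Set.univ (fun _ : Fin n => Set.Icc (0:ℝ) θ)) =
      ENNReal.ofReal θ ^ n := by
    rw [volume_pi_pi]; simp [Real.volume_Icc]
  haveI hfin : IsFiniteMeasure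
      (volume.restrict (Set.pi Set.univ (fun _ : Fin n => Set.Icc (0:ℝ) θ))) := by
    constructor
    rw [Measure.restrict_apply_univ, hvolcube]
    exact ENNReal.pow_lt_top ENNReal.ofReal_lt_top
  -- inner interval integral
  have hinner : ∀ m : ℝ, (∫ t in (0:ℝ)..m, (k:ℝ) * t ^ (k-1)) = m ^ k := by
    intro m
    rw [intervalIntegral.integral_const_mul, integral_pow, Nat.sub_add_cancel hk,
      zero_pow (by omega : k ≠ 0)]
    field_simp
    push_cast [Nat.cast_sub hk]
    ring
  -- integrability of sup ^ k on the cube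
  have hint : IntegrableOn (fun x : Fin n → ℝ => (⨆ i, x i) ^ k)
      (Set.pi Set.univ (fun _ : Fin n => Set.Icc (0:ℝ) θ)) volume := by
    refine ⟨(msup.pow_const k).aestronglyMeasurable, ?_⟩
    apply HasFiniteIntegral.of_bounded (C := θ ^ k)
    rw [ae_restrict_iff' hcmble]
    refine ae_of_all _ fun x hx => ?_
    have h0 := (hsupmem x hx).1
    have h1 := (hsupmem x hx).2
    rw [Real.norm_eq_abs, abs_of_nonneg (pow_nonneg h0 k)]
    exact pow_le_pow_left₀ h0 h1 k
  have hnonneg : 0 ≤ᵐ[volume.restrict (Set.pi Set.univ (fun _ : Fin n => Set.Icc (0:ℝ) θ))]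
      fun x : Fin n → ℝ => (⨆ i, x i) ^ k := by
    rw [Filter.EventuallyLE, ae_restrict_iff' hcmble]
    exact ae_of_all _ fun x hx => pow_nonneg (hsupmem x hx).1 k
  -- the layer cake identity, LHS simplified
  have hlayer := naudts_layer n hn θ k _ hcmble hsupmem
  simp_rw [hinner] at hlayer
  -- RHS: restrict to Ioc 0 θ
  have hRHS : (∫⁻ t in Ioi (0:ℝ),
      (volume.restrict (Set.pi Set.univ (fun _ : Fin n => Set.Icc (0:ℝ) θ)))
        {x : Fin n → ℝ | t ≤ ⨆ i, x i} * ENNReal.ofReal ((k:ℝ) * t ^ (k-1))) =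
      ENNReal.ofReal (∫ t in Ioc (0:ℝ) θ, (θ ^ n - t ^ n) * ((k:ℝ) * t ^ (k-1))) := by
    rw [← Ioc_union_Ioi_eq_Ioi hθ.le,
      lintegral_union measurableSet_Ioi (Ioc_disjoint_Ioi le_rfl)]
    have hz : ∫⁻ t in Ioi θ,
        (volume.restrict (Set.pi Set.univ (fun _ : Fin n => Set.Icc (0:ℝ) θ)))
          {x : Fin n → ℝ | t ≤ ⨆ i, x i} * ENNReal.ofReal ((k:ℝ) * t ^ (k-1)) = 0 := by
      rw [← lintegral_zero (μ := volume.restrict (Ioi θ))]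
      apply setLIntegral_congr_fun measurableSet_Ioi
      intro t ht
      beta_reduce
      have hm : (volume.restrict (Set.pi Set.univ (fun _ : Fin n => Set.Icc (0:ℝ) θ)))
          {x : Fin n → ℝ | t ≤ ⨆ i, x i} = 0 := by
        have hmb : MeasurableSet {x : Fin n → ℝ | t ≤ ⨆ i, x i} := msup measurableSet_Ici
        rw [Measure.restrict_apply hmb]
        convert measure_empty (μ := (volume : Measure (Fin n → ℝ)))
        ext x
        simp only [mem_inter_iff, mem_setOf_eq, mem_empty_iff_false, iff_false, not_and]
        intro hts hc
        exact absurd ((hsupmem x hc).2) (not_le.mpr (lt_of_lt_of_le ht hts))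
      rw [hm, zero_mul]
    rw [hz, add_zero]
    have hcongr : ∫⁻ t in Ioc (0:ℝ) θ,
        (volume.restrict (Set.pi Set.univ (fun _ : Fin n => Set.Icc (0:ℝ) θ)))
          {x : Fin n → ℝ | t ≤ ⨆ i, x i} * ENNReal.ofReal ((k:ℝ) * t ^ (k-1)) =
        ∫⁻ t in Ioc (0:ℝ) θ, ENNReal.ofReal ((θ ^ n - t ^ n) * ((k:ℝ) * t ^ (k-1))) := by
      apply setLIntegral_congr_fun measurableSet_Ioc
      intro t ht
      beta_reduce
      have hnn : (0:ℝ) ≤ θ ^ n - t ^ n := by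
        have := pow_le_pow_left₀ ht.1.le ht.2 n
        linarith
      rw [naudts_tail_meas n hn θ hθ t ht, ← ENNReal.ofReal_mul hnn]
    rw [hcongr]
    have hintc : IntegrableOn (fun t : ℝ => (θ ^ n - t ^ n) * ((k:ℝ) * t ^ (k-1)))
        (Ioc (0:ℝ) θ) volume := Continuous.integrableOn_Ioc
        ((continuous_const.sub (continuous_pow n)).mul (continuous_const.mul (continuous_pow (k-1))))
    have hnn2 : (0:(ℝ)→ℝ) ≤ᵐ[volume.restrict (Ioc (0:ℝ) θ)]
        fun t : ℝ => (θ ^ n - t ^ n) * ((k:ℝ) * t ^ (k-1)) := by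
      rw [Filter.EventuallyLE, ae_restrict_iff' measurableSet_Ioc]
      refine ae_of_all _ fun t ht => ?_
      have h2 : 0 ≤ θ ^ n - t ^ n := by
        have := pow_le_pow_left₀ ht.1.le ht.2 n
        linarith
      have h3 : (0:ℝ) < t := ht.1
      positivity
    rw [← ofReal_integral_eq_lintegral_ofReal hintc hnn2]
  -- the real interval integral
  have hival : (∫ t in Ioc (0:ℝ) θ, (θ ^ n - t ^ n) * ((k:ℝ) * t ^ (k-1))) =
      (n : ℝ) / ((n : ℝ) + k) * θ ^ (n + k) := by
    rw [← intervalIntegral.integral_of_le hθ.le]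
    have heq : ∀ t : ℝ, (θ ^ n - t ^ n) * ((k:ℝ) * t ^ (k-1)) =
        (k:ℝ) * θ ^ n * t ^ (k-1) - (k:ℝ) * t ^ (n + k - 1) := by
      intro t
      have h5 : t ^ n * t ^ (k-1) = t ^ (n + k - 1) := by
        rw [← pow_add]; congr 1; omega
      rw [← h5]; ring
    simp_rw [heq]
    rw [intervalIntegral.integral_sub
      (((intervalIntegral.intervalIntegrable_pow _).const_mul _))
      (((intervalIntegral.intervalIntegrable_pow _).const_mul _)),
      intervalIntegral.integral_const_mul, intervalIntegral.integral_const_mul,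
      integral_pow, integral_pow, Nat.sub_add_cancel hk,
      Nat.sub_add_cancel (by omega : 1 ≤ n + k),
      zero_pow (by omega : k ≠ 0), zero_pow (by omega : n + k ≠ 0)]
    have hpow : θ ^ (n + k) = θ ^ n * θ ^ k := pow_add θ n k
    have hnk : ((n:ℝ) + k) = ((n + k : ℕ) : ℝ) := by push_cast; ring
    rw [hnk]
    have h4 : ((n + k : ℕ) : ℝ) ≠ 0 := Nat.cast_ne_zero.mpr (by omega)
    field_simp
    push_cast [Nat.cast_sub hk, Nat.cast_sub (by omega : 1 ≤ n + k)]
    ring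
  -- combine
  have hofreal : ENNReal.ofReal (∫ x in Set.pi Set.univ (fun _ : Fin n => Set.Icc (0:ℝ) θ),
      (⨆ i, x i) ^ k) = ENNReal.ofReal ((n : ℝ) / ((n : ℝ) + k) * θ ^ (n + k)) := by
    rw [ofReal_integral_eq_lintegral_ofReal hint hnonneg, hlayer, hRHS, hival]
  rw [ENNReal.ofReal_eq_ofReal_iff] at hofreal
  · exact hofreal
  · exact setIntegral_nonneg hcmble fun x hx => pow_nonneg (hsupmem x hx).1 k
  · positivity

theorem cube_quad (n : ℕ) (hn : 1 ≤ n) (θ : ℝ) (hθ : 0 < θ) (a b c : ℝ) :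
    (∫ x in Set.pi Set.univ (fun _ : Fin n => Set.Icc (0:ℝ) θ),
        (a + b * (⨆ i, x i) + c * (⨆ i, x i) ^ 2)) =
      a * θ ^ n + b * ((n : ℝ) / ((n : ℝ) + 1) * θ ^ (n + 1)) +
        c * ((n : ℝ) / ((n : ℝ) + 2) * θ ^ (n + 2)) := by
  haveI : Nonempty (Fin n) := Fin.pos_iff_nonempty.mp hn
  have hcmble : MeasurableSet (Set.pi Set.univ (fun _ : Fin n => Set.Icc (0:ℝ) θ)) :=
    MeasurableSet.univ_pi fun _ => measurableSet_Icc
  have msup : Measurable fun x : Fin n → ℝ => ⨆ i, x i :=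
    Measurable.iSup fun i => measurable_pi_apply i
  have hsupmem : ∀ x ∈ Set.pi Set.univ (fun _ : Fin n => Set.Icc (0:ℝ) θ),
      (⨆ i, x i) ∈ Icc (0:ℝ) θ := by
    intro x hx
    constructor
    · exact le_trans (hx ⟨0, hn⟩ (mem_univ _)).1
        (le_ciSup (Set.Finite.bddAbove (Set.finite_range x)) _)
    · exact ciSup_le fun i => (hx i (mem_univ _)).2
  have hvolcube : volume (Set.pi Set.univ (fun _ : Fin n => Set.Icc (0:ℝ) θ)) =
      ENNReal.ofReal θ ^ n := by
    rw [volume_pi_pi]; simp [Real.volume_Icc]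
  haveI hfin : IsFiniteMeasure
      (volume.restrict (Set.pi Set.univ (fun _ : Fin n => Set.Icc (0:ℝ) θ))) := by
    constructor
    rw [Measure.restrict_apply_univ, hvolcube]
    exact ENNReal.pow_lt_top ENNReal.ofReal_lt_top
  have hintk : ∀ k : ℕ, IntegrableOn (fun x : Fin n → ℝ => (⨆ i, x i) ^ k)
      (Set.pi Set.univ (fun _ : Fin n => Set.Icc (0:ℝ) θ)) volume := by
    intro k
    refine ⟨(msup.pow_const k).aestronglyMeasurable, ?_⟩
    apply HasFiniteIntegral.of_bounded (C := θ ^ k)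
    rw [ae_restrict_iff' hcmble]
    refine ae_of_all _ fun x hx => ?_
    rw [Real.norm_eq_abs, abs_of_nonneg (pow_nonneg (hsupmem x hx).1 k)]
    exact pow_le_pow_left₀ (hsupmem x hx).1 (hsupmem x hx).2 k
  have hint1 : IntegrableOn (fun x : Fin n → ℝ => b * (⨆ i, x i))
      (Set.pi Set.univ (fun _ : Fin n => Set.Icc (0:ℝ) θ)) volume := by
    have := (hintk 1).const_mul b
    simp only [pow_one] at this
    exact this
  have hint2 : IntegrableOn (fun x : Fin n → ℝ => c * (⨆ i, x i) ^ 2)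
      (Set.pi Set.univ (fun _ : Fin n => Set.Icc (0:ℝ) θ)) volume :=
    (hintk 2).const_mul c
  rw [integral_add (by exact (integrable_const a).add hint1) hint2,
    integral_add (integrable_const a) hint1,
    integral_const, integral_const_mul, integral_const_mul]
  have h1 : (∫ x in Set.pi Set.univ (fun _ : Fin n => Set.Icc (0:ℝ) θ), (⨆ i, x i)) =
      (n : ℝ) / ((n : ℝ) + 1) * θ ^ (n + 1) := by
    have := cube_sup_pow n hn θ hθ 1 le_rfl
    simpa [pow_one] using this
  have h2 := cube_sup_pow n hn θ hθ 2 (by omega)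
  rw [h1, h2]
  rw [measureReal_def, Measure.restrict_apply_univ, hvolcube]
  have : (ENNReal.ofReal θ ^ n).toReal = θ ^ n := by
    rw [← ENNReal.ofReal_pow hθ.le, ENNReal.toReal_ofReal (pow_nonneg hθ.le n)]
  rw [this]
  push_cast
  rw [smul_eq_mul]
  ring

theorem naudts_mean (n : ℕ) (hn : 1 ≤ n) (θ : ℝ) (hθ : 0 < θ) :
    (∫ x in Set.pi Set.univ (fun _ : Fin n => Set.Icc (0:ℝ) θ),
        (⨆ i, x i) * (((n : ℝ) + 1) / θ ^ n * (1 - (⨆ i, x i) / θ))) =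
      (n : ℝ) * θ / ((n : ℝ) + 2) := by
  have hn0 : (0:ℝ) < (n:ℝ) := by exact_mod_cast Nat.pos_of_ne_zero (by omega)
  have e : (fun x : Fin n → ℝ =>
      (⨆ i, x i) * (((n : ℝ) + 1) / θ ^ n * (1 - (⨆ i, x i) / θ))) =
      fun x : Fin n → ℝ => (0:ℝ) + (((n:ℝ)+1) / θ ^ n) * (⨆ i, x i) +
        (-(((n:ℝ)+1) / θ ^ (n+1))) * (⨆ i, x i) ^ 2 := by
    funext x
    have hθn : θ ^ n ≠ 0 := pow_ne_zero _ hθ.ne'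
    have hθn1 : θ ^ (n+1) ≠ 0 := pow_ne_zero _ hθ.ne'
    field_simp
    ring
  rw [e, cube_quad n hn θ hθ]
  have h1 : ((n:ℝ)+1) ≠ 0 := by positivity
  have h2 : ((n:ℝ)+2) ≠ 0 := by positivity
  have hθn : θ ^ n ≠ 0 := pow_ne_zero _ hθ.ne'
  field_simp
  ring

/-- The sample maximum `T = max Xᵢ` of `n` i.i.d. `Uniform[0,θ]` variables attains
Naudts's generalized Cramér–Rao bound with the deformed-exponential escort family
`g(x,θ) = (n+1)/θⁿ (1 − t/θ)`, `t = max xᵢ`: `g` integrates to 1 on `[0,θ]ⁿ`,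
`E_{g_θ}[T] = λ(θ) = nθ/(n+2)`, and
`Var_{f_θ}(T) = nθ²/((n+1)²(n+2)) = (λ′(θ))²/N(θ)`. -/
theorem uniform_sample_max_attains_naudts_bound
    (n : ℕ) (hn : 1 ≤ n) (θ : ℝ) (hθ : 0 < θ)
    (f g : (Fin n → ℝ) → ℝ → ℝ)
    (hf : ∀ x t, f x t = 1 / t ^ n)
    (hg : ∀ x t, g x t = ((n : ℝ) + 1) / t ^ n * (1 - (⨆ i, x i) / t)) :
    (∫ x in Set.pi Set.univ (fun _ : Fin n => Set.Icc (0:ℝ) θ), g x θ) = 1 ∧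
    (∫ x in Set.pi Set.univ (fun _ : Fin n => Set.Icc (0:ℝ) θ), (⨆ i, x i) * g x θ) =
      (n : ℝ) * θ / ((n : ℝ) + 2) ∧
    (∫ x in Set.pi Set.univ (fun _ : Fin n => Set.Icc (0:ℝ) θ),
        ((⨆ i, x i) - (n : ℝ) * θ / ((n : ℝ) + 1)) ^ 2 * f x θ) =
      (n : ℝ) * θ ^ 2 / (((n : ℝ) + 1) ^ 2 * ((n : ℝ) + 2)) ∧
    (n : ℝ) * θ ^ 2 / (((n : ℝ) + 1) ^ 2 * ((n : ℝ) + 2)) =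
      (deriv (fun t => ∫ x in Set.pi Set.univ (fun _ : Fin n => Set.Icc (0:ℝ) t),
          (⨆ i, x i) * g x t) θ) ^ 2 /
        (∫ x in Set.pi Set.univ (fun _ : Fin n => Set.Icc (0:ℝ) θ),
          (deriv (fun t => g x t) θ) ^ 2 / f x θ) := by
  have hn0 : ((n:ℝ)) ≠ 0 := Nat.cast_ne_zero.mpr (by omega)
  have hn1 : ((n:ℝ)+1) ≠ 0 := by positivity
  have hn2 : ((n:ℝ)+2) ≠ 0 := by positivity
  have hθ0 : θ ≠ 0 := hθ.ne'
  have hθn : θ ^ n ≠ 0 := pow_ne_zero _ hθ0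
  refine ⟨?_, ?_, ?_, ?_⟩
  · -- normalization
    have e : (fun x : Fin n → ℝ => g x θ) =
        fun x : Fin n → ℝ => (((n:ℝ)+1) / θ ^ n) + (-(((n:ℝ)+1) / θ ^ (n+1))) * (⨆ i, x i) +
          (0:ℝ) * (⨆ i, x i) ^ 2 := by
      funext x
      rw [hg]
      have hθn1 : θ ^ (n+1) ≠ 0 := pow_ne_zero _ hθ0
      field_simp
      ring
    rw [e, cube_quad n hn θ hθ]
    field_simp
    ring
  · -- mean
    have e : (fun x : Fin n → ℝ => (⨆ i, x i) * g x θ) =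
        fun x : Fin n → ℝ => (⨆ i, x i) * (((n : ℝ) + 1) / θ ^ n * (1 - (⨆ i, x i) / θ)) := by
      funext x; rw [hg]
    rw [e, naudts_mean n hn θ hθ]
  · -- variance
    have e : (fun x : Fin n → ℝ => ((⨆ i, x i) - (n : ℝ) * θ / ((n : ℝ) + 1)) ^ 2 * f x θ) =
        fun x : Fin n → ℝ => ((n:ℝ)^2 * θ^2 / (((n:ℝ)+1)^2 * θ ^ n)) +
          (-(2 * (n:ℝ) * θ / (((n:ℝ)+1) * θ ^ n))) * (⨆ i, x i) +
          ((1:ℝ) / θ ^ n) * (⨆ i, x i) ^ 2 := by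
      funext x
      rw [hf]
      field_simp
      ring
    rw [e, cube_quad n hn θ hθ]
    field_simp
    ring
  · -- the bound
    have hnum : deriv (fun t => ∫ x in Set.pi Set.univ (fun _ : Fin n => Set.Icc (0:ℝ) t),
        (⨆ i, x i) * g x t) θ = (n : ℝ) / ((n : ℝ) + 2) := by
      have hev : (fun t => ∫ x in Set.pi Set.univ (fun _ : Fin n => Set.Icc (0:ℝ) t),
          (⨆ i, x i) * g x t) =ᶠ[nhds θ] fun t => (n:ℝ) * t / ((n:ℝ) + 2) := by
        refine Filter.eventually_of_mem (isOpen_Ioi.mem_nhds hθ) fun t ht => ?_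
        have e : (fun x : Fin n → ℝ => (⨆ i, x i) * g x t) =
            fun x : Fin n → ℝ => (⨆ i, x i) * (((n : ℝ) + 1) / t ^ n * (1 - (⨆ i, x i) / t)) := by
          funext x; rw [hg]
        show (∫ x in Set.pi Set.univ (fun _ : Fin n => Set.Icc (0:ℝ) t), (⨆ i, x i) * g x t) = _
        rw [e, naudts_mean n hn t ht]
      rw [hev.deriv_eq]
      have h : HasDerivAt (fun t : ℝ => (n:ℝ) * t / ((n:ℝ) + 2)) ((n : ℝ) / ((n : ℝ) + 2)) θ := by
        have h0 : HasDerivAt (fun t : ℝ => t) 1 θ := hasDerivAt_id θ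
        have := (h0.const_mul ((n:ℝ))).div_const ((n:ℝ) + 2)
        simpa using this
      exact h.deriv
    have hD : ∀ x : Fin n → ℝ, deriv (fun t => g x t) θ =
        -((n:ℝ) * ((n:ℝ)+1)) / θ ^ (n+1) + (((n:ℝ)+1)^2 / θ ^ (n+2)) * (⨆ i, x i) := by
      intro x
      have hfun : (fun t => g x t) =
          fun t : ℝ => (((n:ℝ)+1) * (t ^ n)⁻¹) * (1 - (⨆ i, x i) * t⁻¹) := by
        funext t
        rw [hg, div_eq_mul_inv, div_eq_mul_inv]
      rw [hfun]
      have h2 : HasDerivAt (fun t : ℝ => (t ^ n)⁻¹)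
          (-((n:ℝ) * θ ^ (n-1)) / (θ ^ n) ^ 2) θ :=
        (hasDerivAt_pow n θ).inv (pow_ne_zero n hθ0)
      have hu := h2.const_mul ((n:ℝ)+1)
      have hv : HasDerivAt (fun t : ℝ => 1 - (⨆ i, x i) * t⁻¹)
          (-((⨆ i, x i) * (-(θ ^ 2)⁻¹))) θ :=
        ((hasDerivAt_inv hθ0).const_mul (⨆ i, x i)).const_sub 1
      rw [show deriv (fun t => ((n:ℝ)+1) * (t ^ n)⁻¹ * (1 - (⨆ i, x i) * t⁻¹)) θ = _ from (hu.mul hv).deriv]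
      obtain ⟨p, rfl⟩ : ∃ p, n = p + 1 := ⟨n - 1, by omega⟩
      simp only [Nat.add_sub_cancel]
      have hp1 : θ ^ (p+1) ≠ 0 := pow_ne_zero _ hθ0
      have hp2 : θ ^ (p+2) ≠ 0 := pow_ne_zero _ hθ0
      have hp3 : θ ^ (p+3) ≠ 0 := pow_ne_zero _ hθ0
      have hpp : θ ^ p ≠ 0 := pow_ne_zero _ hθ0
      push_cast
      field_simp
      ring
    have eD : (fun x : Fin n → ℝ => (deriv (fun t => g x t) θ) ^ 2 / f x θ) =
        fun x : Fin n → ℝ => ((n:ℝ)^2 * ((n:ℝ)+1)^2 / θ ^ (n+2)) +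
          (-(2 * (n:ℝ) * ((n:ℝ)+1)^3 / θ ^ (n+3))) * (⨆ i, x i) +
          (((n:ℝ)+1)^4 / θ ^ (n+4)) * (⨆ i, x i) ^ 2 := by
      funext x
      rw [hD x, hf]
      have h1 : θ ^ (n+1) ≠ 0 := pow_ne_zero _ hθ0
      have h2 : θ ^ (n+2) ≠ 0 := pow_ne_zero _ hθ0
      have h3 : θ ^ (n+3) ≠ 0 := pow_ne_zero _ hθ0
      have h4 : θ ^ (n+4) ≠ 0 := pow_ne_zero _ hθ0
      field_simp
      ring
    rw [hnum, eD, cube_quad n hn θ hθ]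
    have h2 : θ ^ (n+2) ≠ 0 := pow_ne_zero _ hθ0
    have h3 : θ ^ (n+3) ≠ 0 := pow_ne_zero _ hθ0
    have h4 : θ ^ (n+4) ≠ 0 := pow_ne_zero _ hθ0
    have hNval : ((n:ℝ)^2 * ((n:ℝ)+1)^2 / θ ^ (n+2)) * θ ^ n +
        (-(2 * (n:ℝ) * ((n:ℝ)+1)^3 / θ ^ (n+3))) * ((n : ℝ) / ((n : ℝ) + 1) * θ ^ (n + 1)) +
        (((n:ℝ)+1)^4 / θ ^ (n+4)) * ((n : ℝ) / ((n : ℝ) + 2) * θ ^ (n + 2)) =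
        (n:ℝ) * ((n:ℝ)+1)^2 / (θ^2 * ((n:ℝ)+2)) := by
      field_simp
      ring
    rw [hNval, div_div_eq_mul_div, div_eq_div_iff (by positivity) (by positivity)]
    field_simp
end
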